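/- Let L be one of the logics tΣ_n[m] or tΠ_n[m] over a finite relational vocabulary τ, for m, n ≥ 0, and let ⊛ be a quantifier-free sum-like binary operation on τ-structures. If A₁, A₁', A₂, A₂' are τ-structures such that A₁ and A₁' satisfy the same L sentences and A₂ and A₂' satisfy the same L sentences, then A₁ ⊛ A₂ and A₁' ⊛ A₂' satisfy the same L sentences. In particular, the L theory of A₁ ⊛ A₂ is determined by the L theories of A₁ and A₂. -/

import Mathlib

namespace FV

open Cardinal

/-- A (finite) relational vocabulary: a type of relation symbols with arities. -/
structure Vocab : Type 1 where
  Rel : Type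
  arity : Rel → ℕ

/-- A structure over a relational vocabulary. -/
structure Struc (τ : Vocab) : Type 1 where
  carrier : Type
  rel : ∀ R : τ.Rel, (Fin (τ.arity R) → carrier) → Prop

/-- Infinitary formulae in negation normal form over a relational vocabulary,
with free variables among `Fin n`. -/
inductive Formula (τ : Vocab) : ℕ → Type 1 where
  | tru {n : ℕ} : Formula τ n
  | fls {n : ℕ} : Formula τ n
  | rel {n : ℕ} (R : τ.Rel) (ts : Fin (τ.arity R) → Fin n) : Formula τ n
  | nrel {n : ℕ} (R : τ.Rel) (ts : Fin (τ.arity R) → Fin n) : Formula τ n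
  | eq {n : ℕ} (i j : Fin n) : Formula τ n
  | neq {n : ℕ} (i j : Fin n) : Formula τ n
  | iAnd {n : ℕ} (I : Type) (f : I → Formula τ n) : Formula τ n
  | iOr {n : ℕ} (I : Type) (f : I → Formula τ n) : Formula τ n
  | ex {n : ℕ} (φ : Formula τ (n+1)) : Formula τ n
  | all {n : ℕ} (φ : Formula τ (n+1)) : Formula τ n

/-- Binary conjunction (a conjunction of arity 2). -/
def Formula.and {τ : Vocab} {n : ℕ} (φ ψ : Formula τ n) : Formula τ n :=
  Formula.iAnd Bool (fun b => if b then φ else ψ)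

/-- Binary disjunction (a disjunction of arity 2). -/
def Formula.or {τ : Vocab} {n : ℕ} (φ ψ : Formula τ n) : Formula τ n :=
  Formula.iOr Bool (fun b => if b then φ else ψ)

/-- Quantifier-free formulae (in NNF, with finite conjunctions/disjunctions). -/
inductive IsQF {τ : Vocab} : ∀ {n : ℕ}, Formula τ n → Prop where
  | tru {n : ℕ} : IsQF (Formula.tru (τ := τ) (n := n))
  | fls {n : ℕ} : IsQF (Formula.fls (τ := τ) (n := n))
  | rel {n : ℕ} (R : τ.Rel) (ts : Fin (τ.arity R) → Fin n) : IsQF (Formula.rel R ts)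
  | nrel {n : ℕ} (R : τ.Rel) (ts : Fin (τ.arity R) → Fin n) : IsQF (Formula.nrel R ts)
  | eq {n : ℕ} (i j : Fin n) : IsQF (Formula.eq (τ := τ) i j)
  | neq {n : ℕ} (i j : Fin n) : IsQF (Formula.neq (τ := τ) i j)
  | iAnd {n : ℕ} (I : Type) (hI : Finite I) (f : I → Formula τ n)
      (h : ∀ i, IsQF (f i)) : IsQF (Formula.iAnd I f)
  | iOr {n : ℕ} (I : Type) (hI : Finite I) (f : I → Formula τ n)
      (h : ∀ i, IsQF (f i)) : IsQF (Formula.iOr I f)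

/-- Satisfaction of a formula in a structure under an assignment. -/
def Sat {τ : Vocab} (A : Struc τ) : ∀ {n : ℕ}, Formula τ n → (Fin n → A.carrier) → Prop
  | _, .tru, _ => True
  | _, .fls, _ => False
  | _, .rel R ts, v => A.rel R (fun i => v (ts i))
  | _, .nrel R ts, v => ¬ A.rel R (fun i => v (ts i))
  | _, .eq i j, v => v i = v j
  | _, .neq i j, v => v i ≠ v j
  | _, .iAnd I f, v => ∀ i : I, Sat A (f i) v
  | _, .iOr I f, v => ∃ i : I, Sat A (f i) v
  | _, .ex φ, v => ∃ a, Sat A φ (Fin.snoc v a)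
  | _, .all φ, v => ∀ a, Sat A φ (Fin.snoc v a)

/-- The empty assignment. -/
def emptyA {α : Type} : Fin 0 → α := fun i => i.elim0

/-- The (quantifier) rank of a formula: the supremum of the number of quantifiers
on any root-to-leaf path of its parse tree. -/
noncomputable def rank {τ : Vocab} : ∀ {n : ℕ}, Formula τ n → Cardinal
  | _, .iAnd I f => ⨆ i : I, rank (f i)
  | _, .iOr I f => ⨆ i : I, rank (f i)
  | _, .ex φ => rank φ + 1
  | _, .all φ => rank φ + 1
  | _, _ => 0

/-- The size of a formula (number of nodes of its parse tree), as a cardinal. -/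
noncomputable def sizeC {τ : Vocab} : ∀ {n : ℕ}, Formula τ n → Cardinal
  | _, .iAnd I f => 1 + Cardinal.sum (fun i : I => sizeC (f i))
  | _, .iOr I f => 1 + Cardinal.sum (fun i : I => sizeC (f i))
  | _, .ex φ => 1 + sizeC φ
  | _, .all φ => 1 + sizeC φ
  | _, _ => 1

mutual
/-- The class tΣ_{κ,λ} of formulae. -/
inductive TSigma (τ : Vocab) (κ : Cardinal) : Ordinal → ∀ {n : ℕ}, Formula τ n → Prop where
  | qf {n : ℕ} {φ : Formula τ n} : IsQF φ → TSigma τ κ 0 φ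
  | conj {n : ℕ} {lam : Ordinal} (I : Type) (f : I → Formula τ n)
      (hI : Cardinal.mk I < κ) (lam' : I → Ordinal) (hlt : ∀ i, lam' i < lam)
      (h : ∀ i, TPi τ κ (lam' i) (f i)) : TSigma τ κ lam (Formula.iAnd I f)
  | ex {n : ℕ} {lam : Ordinal} {φ : Formula τ (n+1)} :
      TSigma τ κ lam φ → TSigma τ κ lam (Formula.ex φ)

/-- The class tΠ_{κ,λ} of formulae. -/
inductive TPi (τ : Vocab) (κ : Cardinal) : Ordinal → ∀ {n : ℕ}, Formula τ n → Prop where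
  | qf {n : ℕ} {φ : Formula τ n} : IsQF φ → TPi τ κ 0 φ
  | disj {n : ℕ} {lam : Ordinal} (I : Type) (f : I → Formula τ n)
      (hI : Cardinal.mk I < κ) (lam' : I → Ordinal) (hlt : ∀ i, lam' i < lam)
      (h : ∀ i, TSigma τ κ (lam' i) (f i)) : TPi τ κ lam (Formula.iOr I f)
  | all {n : ℕ} {lam : Ordinal} {φ : Formula τ (n+1)} :
      TPi τ κ lam φ → TPi τ κ lam (Formula.all φ)
end

/-- tΣ_{∞,λ}: union of tΣ_{κ,λ} over all infinite cardinals κ. -/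
def TSigmaInf (τ : Vocab) (lam : Ordinal) {n : ℕ} (φ : Formula τ n) : Prop :=
  ∃ κ : Cardinal, ℵ₀ ≤ κ ∧ TSigma τ κ lam φ

/-- tΠ_{∞,λ}: union of tΠ_{κ,λ} over all infinite cardinals κ. -/
def TPiInf (τ : Vocab) (lam : Ordinal) {n : ℕ} (φ : Formula τ n) : Prop :=
  ∃ κ : Cardinal, ℵ₀ ≤ κ ∧ TPi τ κ lam φ

/-- The λ-fold exponential `tower` function (taking suprema at limits). -/
noncomputable def towerC (κ : Cardinal) (l : Ordinal) : Cardinal :=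
  Ordinal.limitRecOn l κ (fun _ ih => (2 : Cardinal) ^ ih)
    (fun o _ ih => ⨆ i : {o' : Ordinal // o' < o}, ih i.1 i.2)

/-- The n-fold exponential `tower` function on naturals. -/
def towerN : ℕ → Cardinal → Cardinal
  | 0, k => k
  | n+1, k => (2 : Cardinal) ^ towerN n k

open Classical in
/-- ρ(κ,λ) = tower(λ,κ) if κ > ω, else ω. -/
noncomputable def rho (κ : Cardinal) (lam : Ordinal) : Cardinal :=
  if ℵ₀ < κ then towerC κ lam else ℵ₀

/-- ∞-propositional formulae over a set `V` of propositional variables. -/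
inductive PropForm (V : Type) : Type 1 where
  | var (v : V) : PropForm V
  | not (p : PropForm V) : PropForm V
  | iAnd (I : Type) (f : I → PropForm V) : PropForm V
  | iOr (I : Type) (f : I → PropForm V) : PropForm V

/-- Binary conjunction of propositional formulae. -/
def PropForm.and {V : Type} (p q : PropForm V) : PropForm V :=
  PropForm.iAnd Bool (fun b => if b then p else q)

/-- Binary disjunction of propositional formulae. -/
def PropForm.or {V : Type} (p q : PropForm V) : PropForm V :=
  PropForm.iOr Bool (fun b => if b then p else q)

/-- Evaluation of an ∞-propositional formula under an assignment. -/
def PropForm.eval {V : Type} (ζ : V → Bool) : PropForm V → Prop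
  | .var v => ζ v = true
  | .not p => ¬ PropForm.eval ζ p
  | .iAnd _ f => ∀ i, PropForm.eval ζ (f i)
  | .iOr _ f => ∃ i, PropForm.eval ζ (f i)

/-- Negation-free ∞-propositional formulae. -/
inductive PropForm.NegFree {V : Type} : PropForm V → Prop where
  | var (v : V) : PropForm.NegFree (.var v)
  | iAnd (I : Type) (f : I → PropForm V) (h : ∀ i, PropForm.NegFree (f i)) :
      PropForm.NegFree (.iAnd I f)
  | iOr (I : Type) (f : I → PropForm V) (h : ∀ i, PropForm.NegFree (f i)) :
      PropForm.NegFree (.iOr I f)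

/-- Finitary (ordinary) propositional formulae. -/
inductive PropForm.Finitary {V : Type} : PropForm V → Prop where
  | var (v : V) : PropForm.Finitary (.var v)
  | not (p : PropForm V) (h : PropForm.Finitary p) : PropForm.Finitary (.not p)
  | iAnd (I : Type) (hI : Finite I) (f : I → PropForm V)
      (h : ∀ i, PropForm.Finitary (f i)) : PropForm.Finitary (.iAnd I f)
  | iOr (I : Type) (hI : Finite I) (f : I → PropForm V)
      (h : ∀ i, PropForm.Finitary (f i)) : PropForm.Finitary (.iOr I f)

/-- Size of an ∞-propositional formula. -/
noncomputable def PropForm.size {V : Type} : PropForm V → Cardinal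
  | .var _ => 1
  | .not p => 1 + PropForm.size p
  | .iAnd I f => 1 + Cardinal.sum (fun i : I => PropForm.size (f i))
  | .iOr I f => 1 + Cardinal.sum (fun i : I => PropForm.size (f i))

/-- A reduction sequence `D(x̄₁, x̄₂) = (Δ₁(x̄₁), Δ₂(x̄₂), β)` over τ. -/
structure RedSeq (τ : Vocab) (r₁ r₂ : ℕ) : Type 1 where
  I : Type
  Δ₁ : I → Formula τ r₁
  Δ₂ : I → Formula τ r₂
  β : PropForm (I × Fin 2)

/-- `(A₁, A₂, ā₁, ā₂)` is a model of the reduction sequence `D`. -/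
def RedSeq.Models {τ : Vocab} {r₁ r₂ : ℕ} (D : RedSeq τ r₁ r₂) (A₁ A₂ : Struc τ)
    (a₁ : Fin r₁ → A₁.carrier) (a₂ : Fin r₂ → A₂.carrier) : Prop :=
  ∃ ζ : D.I × Fin 2 → Bool, D.β.eval ζ ∧
    (∀ i : D.I, (ζ (i, 0) = true ↔ Sat A₁ (D.Δ₁ i) a₁)) ∧
    (∀ i : D.I, (ζ (i, 1) = true ↔ Sat A₂ (D.Δ₂ i) a₂))

/-- Size of a reduction sequence. -/
noncomputable def RedSeq.size {τ : Vocab} {r₁ r₂ : ℕ} (D : RedSeq τ r₁ r₂) : Cardinal :=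
  Cardinal.sum (fun i : D.I => sizeC (D.Δ₁ i)) +
    Cardinal.sum (fun i : D.I => sizeC (D.Δ₂ i)) + D.β.size

/-- The vocabulary τ̱ = τ ∪ {P} for a new unary predicate P (represented by `none`). -/
def annotV (τ : Vocab) : Vocab where
  Rel := Option τ.Rel
  arity := fun R => match R with
    | none => 1
    | some S => τ.arity S

/-- The annotated disjoint union of two τ-structures: their disjoint union,
expanded by interpreting the new unary predicate P as the universe of the first. -/
def adu {τ : Vocab} (A₁ A₂ : Struc τ) : Struc (annotV τ) where
  carrier := A₁.carrier ⊕ A₂.carrier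
  rel := fun R => match R with
    | none => fun v => (v ⟨0, Nat.one_pos⟩).isLeft = true
    | some S => fun v =>
        (∃ w : Fin (τ.arity S) → A₁.carrier, A₁.rel S w ∧ v = fun i => Sum.inl (w i)) ∨
        (∃ w : Fin (τ.arity S) → A₂.carrier, A₂.rel S w ∧ v = fun i => Sum.inr (w i))

/-- `D` is a Feferman–Vaught decomposition of `φ(x̄₁,x̄₂)` over annotated disjoint union. -/
def FVDecompADU {τ : Vocab} {r₁ r₂ : ℕ} (φ : Formula (annotV τ) (r₁ + r₂))
    (D : RedSeq τ r₁ r₂) : Prop :=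
  ∀ (A₁ A₂ : Struc τ) (a₁ : Fin r₁ → A₁.carrier) (a₂ : Fin r₂ → A₂.carrier),
    Sat (adu A₁ A₂) φ (Fin.append (fun i => Sum.inl (a₁ i)) (fun i => Sum.inr (a₂ i)))
      ↔ D.Models A₁ A₂ a₁ a₂

/-- `D` is a Feferman–Vaught decomposition of the sentence `φ` over the binary operation `op`. -/
def FVDecompOp {τ : Vocab} (op : Struc τ → Struc τ → Struc τ) (φ : Formula τ 0)
    (D : RedSeq τ 0 0) : Prop :=
  ∀ A₁ A₂ : Struc τ, Sat (op A₁ A₂) φ emptyA ↔ D.Models A₁ A₂ emptyA emptyA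

/-- A quantifier-free scalar (σ,τ)-interpretation. -/
structure QFInterp (σ τ : Vocab) : Type 1 where
  xiU : Formula σ 1
  xiR : ∀ R : τ.Rel, Formula σ (τ.arity R)
  hU : IsQF xiU
  hR : ∀ R : τ.Rel, IsQF (xiR R)

/-- The τ-structure interpreted in a σ-structure by a quantifier-free interpretation. -/
def QFInterp.app {σ τ : Vocab} (Ξ : QFInterp σ τ) (A : Struc σ) : Struc τ where
  carrier := { a : A.carrier // Sat A Ξ.xiU (fun _ => a) }
  rel := fun R v => Sat A (Ξ.xiR R) (fun i => (v i).1)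

/-- The quantifier-free sum-like binary operation defined by a (τ̱,τ)-interpretation. -/
def sumLike {τ : Vocab} (Ξ : QFInterp (annotV τ) τ) (A₁ A₂ : Struc τ) : Struc τ :=
  Ξ.app (adu A₁ A₂)


/-- Relabelling of free variables. -/
def relabel {τ : Vocab} : ∀ {m n : ℕ}, (Fin m → Fin n) → Formula τ m → Formula τ n
  | _, _, _, .tru => .tru
  | _, _, _, .fls => .fls
  | _, _, g, .rel R ts => .rel R (fun i => g (ts i))
  | _, _, g, .nrel R ts => .nrel R (fun i => g (ts i))
  | _, _, g, .eq i j => .eq (g i) (g j)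
  | _, _, g, .neq i j => .neq (g i) (g j)
  | _, _, g, .iAnd I f => .iAnd I (fun i => relabel g (f i))
  | _, _, g, .iOr I f => .iOr I (fun i => relabel g (f i))
  | _, _, g, .ex φ => .ex (relabel (Fin.snoc (fun i => Fin.castSucc (g i)) (Fin.last _)) φ)
  | _, _, g, .all φ => .all (relabel (Fin.snoc (fun i => Fin.castSucc (g i)) (Fin.last _)) φ)

/-- Negation, in negation normal form. -/
def nnfNeg {τ : Vocab} : ∀ {n : ℕ}, Formula τ n → Formula τ n
  | _, .tru => .fls
  | _, .fls => .tru
  | _, .rel R ts => .nrel R ts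
  | _, .nrel R ts => .rel R ts
  | _, .eq i j => .neq i j
  | _, .neq i j => .eq i j
  | _, .iAnd I f => .iOr I (fun i => nnfNeg (f i))
  | _, .iOr I f => .iAnd I (fun i => nnfNeg (f i))
  | _, .ex φ => .all (nnfNeg φ)
  | _, .all φ => .ex (nnfNeg φ)

/-- Finite conjunction of a tuple of formulae. -/
def finAnd {τ : Vocab} {n : ℕ} : ∀ {r : ℕ}, (Fin r → Formula τ n) → Formula τ n
  | 0, _ => .tru
  | r+1, f => (finAnd (fun i => f (Fin.castSucc i))).and (f (Fin.last r))

/-- A block of `k` existential quantifiers. -/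
def exBlock {τ : Vocab} : ∀ (k : ℕ) {r : ℕ}, Formula τ (r + k) → Formula τ r
  | 0, _, φ => φ
  | k+1, _, φ => exBlock k (Formula.ex φ)

/-- A block of `k` universal quantifiers. -/
def allBlock {τ : Vocab} : ∀ (k : ℕ) {r : ℕ}, Formula τ (r + k) → Formula τ r
  | 0, _, φ => φ
  | k+1, _, φ => allBlock k (Formula.all φ)

mutual
/-- The class tΣ_{(n,k)}: tΣ_n formulae all of whose quantifier blocks have length exactly k. -/
inductive SigNK (τ : Vocab) (k : ℕ) : ℕ → ∀ {r : ℕ}, Formula τ r → Prop where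
  | qf {r : ℕ} {φ : Formula τ r} : IsQF φ → SigNK τ k 0 φ
  | blk {r n : ℕ} (hn : 0 < n) (I : Type) (hI : Finite I) (f : I → Formula τ (r + k))
      (n' : I → ℕ) (hlt : ∀ i, n' i < n) (h : ∀ i, PiNK τ k (n' i) (f i)) :
      SigNK τ k n (exBlock k (Formula.iAnd I f))
/-- The class tΠ_{(n,k)}: tΠ_n formulae all of whose quantifier blocks have length exactly k. -/
inductive PiNK (τ : Vocab) (k : ℕ) : ℕ → ∀ {r : ℕ}, Formula τ r → Prop where
  | qf {r : ℕ} {φ : Formula τ r} : IsQF φ → PiNK τ k 0 φ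
  | blk {r n : ℕ} (hn : 0 < n) (I : Type) (hI : Finite I) (f : I → Formula τ (r + k))
      (n' : I → ℕ) (hlt : ∀ i, n' i < n) (h : ∀ i, SigNK τ k (n' i) (f i)) :
      PiNK τ k n (allBlock k (Formula.iOr I f))
end

/-- Partial isomorphism condition on a pair of tuples. -/
def PIso {τ : Vocab} (A₁ A₂ : Struc τ) (r : ℕ)
    (a₁ : Fin r → A₁.carrier) (a₂ : Fin r → A₂.carrier) : Prop :=
  (∀ i j : Fin r, a₁ i = a₁ j ↔ a₂ i = a₂ j) ∧
  (∀ (R : τ.Rel) (ts : Fin (τ.arity R) → Fin r),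
      A₁.rel R (fun l => a₁ (ts l)) ↔ A₂.rel R (fun l => a₂ (ts l)))

/-- The Duplicator has a winning strategy in the (n,k)-prefix game on the ordered pair
((A₁,ā₁),(A₂,ā₂)): in odd rounds the Spoiler picks a k-tuple in A₁ (and the Duplicator
answers in A₂), in even rounds the roles of the structures are swapped; the Duplicator wins
a play if the chosen tuples collectively form a partial isomorphism. -/
def DWinPrefix {τ : Vocab} (k : ℕ) : ℕ → (A₁ A₂ : Struc τ) → (r : ℕ) →
    (Fin r → A₁.carrier) → (Fin r → A₂.carrier) → Prop
  | 0, A₁, A₂, r, a₁, a₂ => PIso A₁ A₂ r a₁ a₂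
  | n+1, A₁, A₂, r, a₁, a₂ =>
      ∀ b₁ : Fin k → A₁.carrier, ∃ b₂ : Fin k → A₂.carrier,
        DWinPrefix k n A₂ A₁ (r + k) (Fin.append a₂ b₂) (Fin.append a₁ b₁)

/-- The Duplicator has a winning strategy in the (n,k)-tree-prefix game on the set
{(A₁,ā₁),(A₂,ā₂)}: in the first round the Spoiler picks a k-tuple in either structure, and
thereafter in the structure in which the Duplicator chose in the previous round. -/
def DWinTree {τ : Vocab} (k : ℕ) : ℕ → (A₁ A₂ : Struc τ) → (r : ℕ) →
    (Fin r → A₁.carrier) → (Fin r → A₂.carrier) → Prop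
  | 0, A₁, A₂, r, a₁, a₂ => PIso A₁ A₂ r a₁ a₂
  | n+1, A₁, A₂, r, a₁, a₂ =>
      (∀ b₁ : Fin k → A₁.carrier, ∃ b₂ : Fin k → A₂.carrier,
        DWinPrefix k n A₂ A₁ (r + k) (Fin.append a₂ b₂) (Fin.append a₁ b₁)) ∧
      (∀ b₂ : Fin k → A₂.carrier, ∃ b₁ : Fin k → A₁.carrier,
        DWinPrefix k n A₁ A₂ (r + k) (Fin.append a₁ b₁) (Fin.append a₂ b₂))

/-- (A₁,ā₁) ⇛_{(n,k)} (A₂,ā₂) : every tΣ_{(n,k)} formula true of (A₁,ā₁) is true of (A₂,ā₂). -/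
def TransferNK {τ : Vocab} (n k : ℕ) (A₁ A₂ : Struc τ) (r : ℕ)
    (a₁ : Fin r → A₁.carrier) (a₂ : Fin r → A₂.carrier) : Prop :=
  ∀ φ : Formula τ r, SigNK τ k n φ → Sat A₁ φ a₁ → Sat A₂ φ a₂

/-- (A₁,ā₁) ≡_{(n,k)} (A₂,ā₂) : agreement on all tΣ_{(n,k)} formulae. -/
def EquivNK {τ : Vocab} (n k : ℕ) (A₁ A₂ : Struc τ) (r : ℕ)
    (a₁ : Fin r → A₁.carrier) (a₂ : Fin r → A₂.carrier) : Prop :=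
  ∀ φ : Formula τ r, SigNK τ k n φ → (Sat A₁ φ a₁ ↔ Sat A₂ φ a₂)

namespace QFInterp

variable {σ τ : Vocab}

/-- The universe formula ξ_U applied at variable `i`. -/
def uAt (Ξ : QFInterp σ τ) {n : ℕ} (i : Fin n) : Formula σ n :=
  relabel (fun _ : Fin 1 => i) Ξ.xiU

/-- The universe formula ξ_U applied at the last (just-quantified) variable. -/
def uLast (Ξ : QFInterp σ τ) {n : ℕ} : Formula σ (n+1) :=
  Ξ.uAt (Fin.last n)

/-- Close a pending quantifier-block guard. -/
def closeG {n : ℕ} : Option (Bool × Formula σ n) → Formula σ n → Formula σ n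
  | none, r => r
  | some (true, g), r => g.and r
  | some (false, g), r => g.or r

/-- Block-wise translation Ξ(φ) of a formula under a quantifier-free interpretation,
with an accumulator carrying the pending universe-guard of the current quantifier block:
Ξ(R(z̄)) = ξ_R(z̄) ∧ ⋀ᵢ ξ_U(zᵢ); Ξ(¬R(z̄)) = ¬ξ_R(z̄) ∧ ⋀ᵢ ξ_U(zᵢ) (¬ξ_R in NNF);
Ξ commutes with conjunctions and disjunctions; Ξ(∃x̄ ⋀ᵢφᵢ) = ∃x̄(⋀ⱼ ξ_U(xⱼ) ∧ ⋀ᵢΞ(φᵢ));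
Ξ(∀x̄ ⋁ᵢφᵢ) = ∀x̄((⋁ⱼ ¬ξ_U(xⱼ)) ∨ ⋁ᵢΞ(φᵢ)) (¬ξ_U in NNF). -/
def trA (Ξ : QFInterp σ τ) : ∀ {n : ℕ}, Option (Bool × Formula σ n) → Formula τ n → Formula σ n
  | _, mode, .tru => closeG mode .tru
  | _, mode, .fls => closeG mode .fls
  | _, mode, .rel R ts =>
      closeG mode ((relabel ts (Ξ.xiR R)).and (finAnd (fun i => Ξ.uAt (ts i))))
  | _, mode, .nrel R ts =>
      closeG mode ((nnfNeg (relabel ts (Ξ.xiR R))).and (finAnd (fun i => Ξ.uAt (ts i))))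
  | _, mode, .eq i j => closeG mode ((Formula.eq i j).and ((Ξ.uAt i).and (Ξ.uAt j)))
  | _, mode, .neq i j => closeG mode ((Formula.neq i j).and ((Ξ.uAt i).and (Ξ.uAt j)))
  | _, some (true, g), .iAnd I f =>
      .iAnd (Option I) (fun o => o.elim g (fun i => Ξ.trA none (f i)))
  | _, some (false, g), .iOr I f =>
      .iOr (Option I) (fun o => o.elim g (fun i => Ξ.trA none (f i)))
  | _, mode, .iAnd I f => closeG mode (.iAnd I (fun i => Ξ.trA none (f i)))
  | _, mode, .iOr I f => closeG mode (.iOr I (fun i => Ξ.trA none (f i)))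
  | _, some (true, g), .ex φ =>
      .ex (Ξ.trA (some (true, (relabel Fin.castSucc g).and Ξ.uLast)) φ)
  | _, some (false, g), .all φ =>
      .all (Ξ.trA (some (false, (relabel Fin.castSucc g).or (nnfNeg Ξ.uLast))) φ)
  | _, mode, .ex φ => closeG mode (.ex (Ξ.trA (some (true, Ξ.uLast)) φ))
  | _, mode, .all φ => closeG mode (.all (Ξ.trA (some (false, nnfNeg Ξ.uLast)) φ))

/-- The translation Ξ(φ) of a formula. -/
def translate (Ξ : QFInterp σ τ) {n : ℕ} (φ : Formula τ n) : Formula σ n :=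
  Ξ.trA none φ

/-- The size |Ξ| of an interpretation: the sum of the sizes of its formulae. -/
noncomputable def size [Fintype τ.Rel] (Ξ : QFInterp σ τ) : Cardinal :=
  sizeC Ξ.xiU + ∑ R : τ.Rel, sizeC (Ξ.xiR R)

end QFInterp


/-!
Fix how the free variables of a formula `φ` are drawn from the two summands. By induction on
`φ ∈ tΣ_λ`, the truth of `φ` in `Ξ(A₁ ⊍̱ A₂)` is a finite disjunction of conditions
`A₁ ⊨ αⱼ ∧ A₂ ⊨ βⱼ` with `αⱼ, βⱼ ∈ tΣ_λ` of rank at most that of `φ`; for `φ ∈ tΠ_λ` this is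
applied to the negation of `φ`. Under such a split every atom of the annotated disjoint union
speaks about one summand only, which settles quantifier-free formulae. A conjunction of negated
decomposable formulae of lower level becomes, after distributing, a disjunction of rectangles
whose sides are conjunctions of tΠ formulae of lower level. An existential quantifier is absorbed
by the summand its witness comes from, after the quantifier-free condition `ξ_U` on the witness
has been split and pushed below the leading quantifiers of that side. The `tΠ_n[m]` case of the
theorem follows from the `tΣ_n[m]` case by negation.
-/

section Formulas

variable {τ : Vocab}

theorem sat_nnfNeg (A : Struc τ) : ∀ {n : ℕ} (φ : Formula τ n) (v : Fin n → A.carrier),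
    Sat A (nnfNeg φ) v ↔ ¬ Sat A φ v
  | _, .tru, _ | _, .fls, _ | _, .rel _ _, _ | _, .nrel _ _, _ | _, .eq _ _, _
  | _, .neq _ _, _ => by simp [nnfNeg, Sat]
  | _, .iAnd _ f, v => by
      simpa only [nnfNeg, Sat, not_forall] using exists_congr fun i => sat_nnfNeg A (f i) v
  | _, .iOr _ f, v => by
      simpa only [nnfNeg, Sat, not_exists] using forall_congr' fun i => sat_nnfNeg A (f i) v
  | _, .ex φ, v => by
      simpa only [nnfNeg, Sat, not_exists] using forall_congr' fun a => sat_nnfNeg A φ _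
  | _, .all φ, v => by
      simpa only [nnfNeg, Sat, not_forall] using exists_congr fun a => sat_nnfNeg A φ _

theorem nnfNeg_nnfNeg : ∀ {n : ℕ} (φ : Formula τ n), nnfNeg (nnfNeg φ) = φ
  | _, .tru | _, .fls | _, .rel _ _ | _, .nrel _ _ | _, .eq _ _ | _, .neq _ _ => rfl
  | _, .iAnd _ f | _, .iOr _ f => by simp only [nnfNeg, nnfNeg_nnfNeg]
  | _, .ex φ | _, .all φ => by simp only [nnfNeg, nnfNeg_nnfNeg]

theorem rank_nnfNeg : ∀ {n : ℕ} (φ : Formula τ n), rank (nnfNeg φ) = rank φ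
  | _, .tru | _, .fls | _, .rel _ _ | _, .nrel _ _ | _, .eq _ _ | _, .neq _ _ => rfl
  | _, .iAnd _ f | _, .iOr _ f => by simp only [nnfNeg, rank, rank_nnfNeg]
  | _, .ex φ | _, .all φ => by simp only [nnfNeg, rank, rank_nnfNeg]

theorem snoc_comp_snoc_castSucc {α : Type} {m n : ℕ} (v : Fin n → α) (a : α)
    (g : Fin m → Fin n) :
    (fun i => Fin.snoc (α := fun _ => α) v a
        (Fin.snoc (α := fun _ => Fin (n + 1)) (fun i => (g i).castSucc) (Fin.last n) i)) =
      Fin.snoc (α := fun _ => α) (fun i => v (g i)) a := by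
  funext i
  exact Fin.lastCases (by simp) (fun i => by simp) i

theorem sat_relabel (A : Struc τ) : ∀ {m n : ℕ} (g : Fin m → Fin n) (φ : Formula τ m)
    (v : Fin n → A.carrier), Sat A (relabel g φ) v ↔ Sat A φ (fun i => v (g i))
  | _, _, _, .tru, _ | _, _, _, .fls, _ | _, _, _, .rel _ _, _ | _, _, _, .nrel _ _, _
  | _, _, _, .eq _ _, _ | _, _, _, .neq _ _, _ => Iff.rfl
  | _, _, g, .iAnd _ f, v => forall_congr' fun i => sat_relabel A g (f i) v
  | _, _, g, .iOr _ f, v => exists_congr fun i => sat_relabel A g (f i) v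
  | _, _, g, .ex φ, v => exists_congr fun a => by
      rw [sat_relabel, snoc_comp_snoc_castSucc]
  | _, _, g, .all φ, v => forall_congr' fun a => by
      rw [sat_relabel, snoc_comp_snoc_castSucc]

theorem sat_and {A : Struc τ} {n : ℕ} {φ ψ : Formula τ n} {v : Fin n → A.carrier} :
    Sat A (φ.and ψ) v ↔ Sat A φ v ∧ Sat A ψ v := by
  simp [Formula.and, Sat, Bool.forall_bool, and_comm]

namespace IsQF

theorem nnfNeg : ∀ {n : ℕ} {φ : Formula τ n}, IsQF φ → IsQF (nnfNeg φ)
  | _, _, .tru => .fls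
  | _, _, .fls => .tru
  | _, _, .rel R ts => .nrel R ts
  | _, _, .nrel R ts => .rel R ts
  | _, _, .eq i j => .neq i j
  | _, _, .neq i j => .eq i j
  | _, _, .iAnd I hI _ h => .iOr I hI _ fun i => (h i).nnfNeg
  | _, _, .iOr I hI _ h => .iAnd I hI _ fun i => (h i).nnfNeg

theorem relabel {m n : ℕ} (g : Fin m → Fin n) {φ : Formula τ m} (h : IsQF φ) :
    IsQF (FV.relabel g φ) := by
  induction h with
  | tru => exact .tru
  | fls => exact .fls
  | rel R ts => exact .rel R _
  | nrel R ts => exact .nrel R _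
  | eq i j => exact .eq _ _
  | neq i j => exact .neq _ _
  | iAnd I hI f _ ih => exact .iAnd I hI _ ih
  | iOr I hI f _ ih => exact .iOr I hI _ ih

theorem and {n : ℕ} {φ ψ : Formula τ n} (hφ : IsQF φ) (hψ : IsQF ψ) : IsQF (φ.and ψ) :=
  .iAnd Bool inferInstance _ fun b => by cases b <;> assumption

theorem rank_eq_zero {n : ℕ} {φ : Formula τ n} (h : IsQF φ) : rank φ = 0 := by
  induction h with
  | iAnd I _ f _ ih | iOr I _ f _ ih =>
      simp only [rank, ih]
      exact le_antisymm (ciSup_le' fun _ => le_rfl) zero_le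
  | _ => rfl

end IsQF

mutual

theorem TSigma.nnfNeg {κ : Cardinal} {lam : Ordinal} {n : ℕ} {φ : Formula τ n} :
    TSigma τ κ lam φ → TPi τ κ lam (nnfNeg φ)
  | .qf h => .qf h.nnfNeg
  | .conj I _ hI lam' hlt h => .disj I _ hI lam' hlt fun i => (h i).nnfNeg
  | .ex h => .all h.nnfNeg

theorem TPi.nnfNeg {κ : Cardinal} {lam : Ordinal} {n : ℕ} {φ : Formula τ n} :
    TPi τ κ lam φ → TSigma τ κ lam (nnfNeg φ)
  | .qf h => .qf h.nnfNeg
  | .disj I _ hI lam' hlt h => .conj I _ hI lam' hlt fun i => (h i).nnfNeg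
  | .all h => .ex h.nnfNeg

end

end Formulas

section Classes

variable {τ : Vocab}

-- tΣ_λ[ρ] in the paper's notation
def TSigmaRk (lam : Ordinal) (ρ : Cardinal) {k : ℕ} (φ : Formula τ k) : Prop :=
  TSigma τ ℵ₀ lam φ ∧ rank φ ≤ ρ

def IsLowerPi (lam : Ordinal) (ρ : Cardinal) {k : ℕ} (φ : Formula τ k) : Prop :=
  IsQF φ ∨ ∃ μ < lam, TPi τ ℵ₀ μ φ ∧ rank φ ≤ ρ

theorem TSigmaRk.iAnd {lam : Ordinal} {ρ : Cardinal} {k : ℕ} {K : Type} [Finite K]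
    {γ : K → Formula τ k} (h : ∀ i, IsLowerPi lam ρ (γ i)) : TSigmaRk lam ρ (.iAnd K γ) := by
  refine ⟨?_, ciSup_le' fun i => ?_⟩
  · rcases eq_or_ne lam 0 with rfl | hlam
    · exact .qf (.iAnd K ‹_› γ fun i =>
        (h i).resolve_right fun ⟨μ, hμ, _⟩ => not_lt_zero hμ)
    · have : ∀ i, ∃ μ < lam, TPi τ ℵ₀ μ (γ i) := fun i => (h i).elim
        (fun hq => ⟨0, pos_iff_ne_zero.2 hlam, .qf hq⟩) fun ⟨μ, hμ, hπ, _⟩ => ⟨μ, hμ, hπ⟩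
      choose μ hμ hπ using this
      exact .conj K γ (Cardinal.lt_aleph0_iff_finite.2 ‹_›) μ hμ hπ
  · rcases h i with hq | ⟨μ, -, -, hr⟩
    · exact hq.rank_eq_zero ▸ zero_le
    · exact hr

theorem TSigma.exists_and_isQF {lam : Ordinal} : ∀ {n : ℕ} {G α : Formula τ n},
    IsQF G → TSigma τ ℵ₀ lam α → ∃ α', TSigmaRk lam (rank α) α' ∧
      ∀ (A : Struc τ) (v : Fin n → A.carrier), Sat A α' v ↔ Sat A G v ∧ Sat A α v
  | _, G, _, hG, .qf hα =>
      ⟨G.and _, ⟨.qf (hG.and hα), (hG.and hα).rank_eq_zero ▸ zero_le⟩, fun _ _ => sat_and⟩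
  | _, G, _, hG, .conj I f hI lam' hlt h => by
      have := Cardinal.lt_aleph0_iff_finite.1 hI
      refine ⟨.iAnd (Option I) fun o => o.elim G f, TSigmaRk.iAnd fun o => ?_,
        fun A v => by simp [Sat, Option.forall]⟩
      cases o with
      | none => exact .inl hG
      | some i => exact .inr ⟨lam' i, hlt i, h i, le_ciSup Cardinal.bddAbove_of_small i⟩
  | _, G, _, hG, .ex hβ => by
      obtain ⟨β', ⟨hβ', hrank⟩, hsat⟩ := hβ.exists_and_isQF (hG.relabel Fin.castSucc)
      refine ⟨.ex β', ⟨.ex hβ', add_le_add_left hrank 1⟩, fun A v => ?_⟩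
      simp only [Sat, hsat, sat_relabel, Fin.snoc_castSucc, exists_and_left]

end Classes

section RectUnion

variable {τ : Vocab} {r₁ r₂ : ℕ}

/-- `P` is a finite union of rectangles `{(A₁, u₁) ⊨ α} × {(A₂, u₂) ⊨ β}` with `α, β ∈ C`. -/
def IsRectUnion (C : ∀ {k : ℕ}, Formula τ k → Prop)
    (P : ∀ A₁ A₂ : Struc τ, (Fin r₁ → A₁.carrier) → (Fin r₂ → A₂.carrier) → Prop) : Prop :=
  ∃ (J : Type) (_ : Finite J) (α : J → Formula τ r₁) (β : J → Formula τ r₂),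
    (∀ j, C (α j) ∧ C (β j)) ∧
    ∀ A₁ A₂ u₁ u₂, P A₁ A₂ u₁ u₂ ↔ ∃ j, Sat A₁ (α j) u₁ ∧ Sat A₂ (β j) u₂

namespace IsRectUnion

variable {C D E : ∀ {k : ℕ}, Formula τ k → Prop}
  {P Q : ∀ A₁ A₂ : Struc τ, (Fin r₁ → A₁.carrier) → (Fin r₂ → A₂.carrier) → Prop}

theorem congr (hP : IsRectUnion C P) (h : ∀ A₁ A₂ u₁ u₂, P A₁ A₂ u₁ u₂ ↔ Q A₁ A₂ u₁ u₂) :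
    IsRectUnion C Q := by
  obtain ⟨J, hJ, α, β, hC, hP⟩ := hP
  exact ⟨J, hJ, α, β, hC, fun A₁ A₂ u₁ u₂ => (h A₁ A₂ u₁ u₂).symm.trans (hP A₁ A₂ u₁ u₂)⟩

theorem mono (hP : IsRectUnion C P) (h : ∀ {k} (φ : Formula τ k), C φ → D φ) :
    IsRectUnion D P := by
  obtain ⟨J, hJ, α, β, hC, hP⟩ := hP
  exact ⟨J, hJ, α, β, fun j => ⟨h _ (hC j).1, h _ (hC j).2⟩, hP⟩

theorem rect {α : Formula τ r₁} {β : Formula τ r₂} (hα : C α) (hβ : C β) :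
    IsRectUnion C fun A₁ A₂ u₁ u₂ => Sat A₁ α u₁ ∧ Sat A₂ β u₂ :=
  ⟨Unit, inferInstance, fun _ => α, fun _ => β, fun _ => ⟨hα, hβ⟩, by simp⟩

theorem const (htru : ∀ {k}, C (.tru : Formula τ k)) (p : Prop) :
    IsRectUnion (r₁ := r₁) (r₂ := r₂) C fun _ _ _ _ => p :=
  ⟨PLift p, inferInstance, fun _ => .tru, fun _ => .tru, fun _ => ⟨htru, htru⟩,
    by simp [Sat]⟩

theorem or (hP : IsRectUnion C P) (hQ : IsRectUnion C Q) :
    IsRectUnion C fun A₁ A₂ u₁ u₂ => P A₁ A₂ u₁ u₂ ∨ Q A₁ A₂ u₁ u₂ := by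
  obtain ⟨J, hJ, α, β, hC, hP⟩ := hP
  obtain ⟨K, hK, α', β', hC', hQ⟩ := hQ
  exact ⟨J ⊕ K, inferInstance, Sum.elim α α', Sum.elim β β', Sum.forall.2 ⟨hC, hC'⟩,
    by simp [hP, hQ]⟩

theorem iUnion {I : Type} [Finite I]
    {P : I → ∀ A₁ A₂ : Struc τ, (Fin r₁ → A₁.carrier) → (Fin r₂ → A₂.carrier) → Prop}
    (h : ∀ i, IsRectUnion C (P i)) :
    IsRectUnion C fun A₁ A₂ u₁ u₂ => ∃ i, P i A₁ A₂ u₁ u₂ := by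
  choose J hJ α β hC hP using h
  exact ⟨Σ i, J i, inferInstance, fun p => α p.1 p.2, fun p => β p.1 p.2,
    fun p => hC p.1 p.2, by simp [hP]⟩

theorem and (hP : IsRectUnion C P) (hQ : IsRectUnion D Q)
    (hCD : ∀ {k} (φ ψ : Formula τ k), C φ → D ψ →
      ∃ χ, E χ ∧ ∀ (A : Struc τ) v, Sat A χ v ↔ Sat A φ v ∧ Sat A ψ v) :
    IsRectUnion E fun A₁ A₂ u₁ u₂ => P A₁ A₂ u₁ u₂ ∧ Q A₁ A₂ u₁ u₂ := by
  obtain ⟨J, hJ, α, β, hC, hP⟩ := hP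
  obtain ⟨K, hK, α', β', hD, hQ⟩ := hQ
  choose χ₁ hχ₁ hsat₁ using fun p : J × K => hCD (α p.1) (α' p.2) (hC p.1).1 (hD p.2).1
  choose χ₂ hχ₂ hsat₂ using fun p : J × K => hCD (β p.1) (β' p.2) (hC p.1).2 (hD p.2).2
  refine ⟨J × K, inferInstance, χ₁, χ₂, fun p => ⟨hχ₁ p, hχ₂ p⟩, fun A₁ A₂ u₁ u₂ => ?_⟩
  simp only [hP, hQ, hsat₁, hsat₂, Prod.exists]
  exact ⟨fun ⟨⟨j, hj₁, hj₂⟩, k, hk₁, hk₂⟩ => ⟨j, k, ⟨hj₁, hk₁⟩, hj₂, hk₂⟩,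
    fun ⟨j, k, ⟨hj₁, hk₁⟩, hj₂, hk₂⟩ => ⟨⟨j, hj₁, hj₂⟩, k, hk₁, hk₂⟩⟩

theorem iInter {I : Type} [Finite I]
    {P : I → ∀ A₁ A₂ : Struc τ, (Fin r₁ → A₁.carrier) → (Fin r₂ → A₂.carrier) → Prop}
    (h : ∀ i, IsRectUnion C (P i))
    (hC : ∀ {k} (γ : I → Formula τ k), (∀ i, C (γ i)) → D (.iAnd I γ)) :
    IsRectUnion D fun A₁ A₂ u₁ u₂ => ∀ i, P i A₁ A₂ u₁ u₂ := by
  choose J hJ α β hαβ hP using h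
  refine ⟨∀ i, J i, inferInstance, fun g => .iAnd I fun i => α i (g i),
    fun g => .iAnd I fun i => β i (g i), fun g => ⟨hC _ fun i => (hαβ i (g i)).1,
      hC _ fun i => (hαβ i (g i)).2⟩, fun A₁ A₂ u₁ u₂ => ?_⟩
  simp only [hP, Sat, Classical.skolem (p := fun i j => Sat A₁ (α i j) u₁ ∧ Sat A₂ (β i j) u₂),
    forall_and]

-- `¬ ⋃ⱼ (αⱼ × βⱼ) = ⋂ⱼ ((¬αⱼ × ⊤) ∪ (⊤ × ¬βⱼ))`
theorem not (hP : IsRectUnion C P) (hneg : ∀ {k} (φ : Formula τ k), C φ → D (nnfNeg φ))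
    (htru : ∀ {k}, D (.tru : Formula τ k))
    (hand : ∀ {k} {K : Type} [Finite K] (γ : K → Formula τ k), (∀ i, D (γ i)) → E (.iAnd K γ)) :
    IsRectUnion E fun A₁ A₂ u₁ u₂ => ¬ P A₁ A₂ u₁ u₂ := by
  obtain ⟨J, hJ, α, β, hC, hP⟩ := hP
  have hrect : ∀ j, IsRectUnion D fun A₁ A₂ u₁ u₂ =>
      ¬ Sat A₁ (α j) u₁ ∨ ¬ Sat A₂ (β j) u₂ := fun j =>
    ((rect (hneg _ (hC j).1) htru).or (rect htru (hneg _ (hC j).2))).congr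
      (by simp [sat_nnfNeg, Sat])
  exact (iInter hrect hand).congr fun A₁ A₂ u₁ u₂ => by
    simp only [hP, not_exists, not_and_or]

theorem existsLeft
    {P : ∀ A₁ A₂ : Struc τ, (Fin (r₁ + 1) → A₁.carrier) → (Fin r₂ → A₂.carrier) → Prop}
    (hP : IsRectUnion C P) (hex : ∀ {k} (φ : Formula τ (k + 1)), C φ → D (.ex φ))
    (hCD : ∀ {k} (φ : Formula τ k), C φ → D φ) :
    IsRectUnion D fun A₁ A₂ u₁ u₂ => ∃ b, P A₁ A₂ (Fin.snoc u₁ b) u₂ := by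
  obtain ⟨J, hJ, α, β, hC, hP⟩ := hP
  refine ⟨J, hJ, fun j => .ex (α j), β, fun j => ⟨hex _ (hC j).1, hCD _ (hC j).2⟩,
    fun A₁ A₂ u₁ u₂ => ?_⟩
  simp only [hP, Sat]
  exact ⟨fun ⟨b, j, h₁, h₂⟩ => ⟨j, ⟨b, h₁⟩, h₂⟩, fun ⟨j, ⟨b, h₁⟩, h₂⟩ => ⟨b, j, h₁, h₂⟩⟩

theorem existsRight
    {P : ∀ A₁ A₂ : Struc τ, (Fin r₁ → A₁.carrier) → (Fin (r₂ + 1) → A₂.carrier) → Prop}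
    (hP : IsRectUnion C P) (hex : ∀ {k} (φ : Formula τ (k + 1)), C φ → D (.ex φ))
    (hCD : ∀ {k} (φ : Formula τ k), C φ → D φ) :
    IsRectUnion D fun A₁ A₂ u₁ u₂ => ∃ b, P A₁ A₂ u₁ (Fin.snoc u₂ b) := by
  obtain ⟨J, hJ, α, β, hC, hP⟩ := hP
  refine ⟨J, hJ, α, fun j => .ex (β j), fun j => ⟨hCD _ (hC j).1, hex _ (hC j).2⟩,
    fun A₁ A₂ u₁ u₂ => ?_⟩
  simp only [hP, Sat]
  exact ⟨fun ⟨b, j, h₁, h₂⟩ => ⟨j, h₁, ⟨b, h₂⟩⟩, fun ⟨j, h₁, ⟨b, h₂⟩⟩ => ⟨b, j, h₁, h₂⟩⟩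

theorem not_of_isQF (hP : IsRectUnion IsQF P) :
    IsRectUnion IsQF fun A₁ A₂ u₁ u₂ => ¬ P A₁ A₂ u₁ u₂ :=
  hP.not (fun _ => IsQF.nnfNeg) IsQF.tru fun γ => IsQF.iAnd _ inferInstance γ

end IsRectUnion

end RectUnion

section AnnotatedUnion

variable {τ : Vocab} {r r₁ r₂ : ℕ}

theorem exists_sumMap_eq_inl {K X Y A B : Type} (u₁ : X → A) (u₂ : Y → B) (x : K → X ⊕ Y)
    (p : (K → A) → Prop) :
    (∃ w, p w ∧ (fun i => Sum.map u₁ u₂ (x i)) = fun i => .inl (w i)) ↔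
      ∃ t : {t : K → X // ∀ i, x i = .inl (t i)}, p fun i => u₁ (t.1 i) := by
  constructor
  · rintro ⟨w, hw, hx⟩
    have : ∀ i, ∃ a, x i = .inl a ∧ u₁ a = w i := fun i => by
      have := congrFun hx i
      rcases h : x i with a | b <;> simp_all
    choose t ht hw' using this
    exact ⟨⟨t, ht⟩, by simpa only [hw'] using hw⟩
  · rintro ⟨⟨t, ht⟩, hp⟩
    exact ⟨_, hp, funext fun i => by simp [ht]⟩

theorem exists_sumMap_eq_inr {K X Y A B : Type} (u₁ : X → A) (u₂ : Y → B) (x : K → X ⊕ Y)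
    (p : (K → B) → Prop) :
    (∃ w, p w ∧ (fun i => Sum.map u₁ u₂ (x i)) = fun i => .inr (w i)) ↔
      ∃ t : {t : K → Y // ∀ i, x i = .inr (t i)}, p fun i => u₂ (t.1 i) := by
  constructor
  · rintro ⟨w, hw, hx⟩
    have : ∀ i, ∃ b, x i = .inr b ∧ u₂ b = w i := fun i => by
      have := congrFun hx i
      rcases h : x i with a | b <;> simp_all
    choose t ht hw' using this
    exact ⟨⟨t, ht⟩, by simpa only [hw'] using hw⟩
  · rintro ⟨⟨t, ht⟩, hp⟩
    exact ⟨_, hp, funext fun i => by simp [ht]⟩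

theorem isRectUnion_adu_rel (R : (annotV τ).Rel) (ts : Fin ((annotV τ).arity R) → Fin r)
    (e : Fin r → Fin r₁ ⊕ Fin r₂) :
    IsRectUnion IsQF fun A₁ A₂ u₁ u₂ =>
      Sat (adu A₁ A₂) (.rel R ts) fun i => Sum.map u₁ u₂ (e i) := by
  cases R with
  | none =>
      rcases h : e (ts ⟨0, Nat.one_pos⟩) with a | b
      · exact (IsRectUnion.const IsQF.tru True).congr fun _ _ _ _ => by simp [Sat, adu, h]
      · exact (IsRectUnion.const IsQF.tru False).congr fun _ _ _ _ => by simp [Sat, adu, h]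
  | some S =>
      refine ((IsRectUnion.iUnion (I := {t // ∀ i, e (ts i) = .inl (t i)}) fun t =>
          IsRectUnion.rect (IsQF.rel S t.1) IsQF.tru).or
        (IsRectUnion.iUnion (I := {t // ∀ i, e (ts i) = .inr (t i)}) fun t =>
          IsRectUnion.rect IsQF.tru (IsQF.rel S t.1))).congr ?_
      intro A₁ A₂ u₁ u₂
      simp only [Sat, adu, and_true, true_and]
      exact (or_congr (exists_sumMap_eq_inl u₁ u₂ _ _) (exists_sumMap_eq_inr u₁ u₂ _ _)).symm

theorem isRectUnion_adu_eq (i j : Fin r) (e : Fin r → Fin r₁ ⊕ Fin r₂) :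
    IsRectUnion IsQF fun (A₁ A₂ : Struc τ) u₁ u₂ =>
      Sat (adu A₁ A₂) (.eq i j) fun i => Sum.map u₁ u₂ (e i) := by
  rcases hi : e i with a | b <;> rcases hj : e j with a' | b'
  · exact (IsRectUnion.rect (IsQF.eq a a') IsQF.tru).congr fun _ _ _ _ => by
      simp [Sat, adu, hi, hj]
  · exact (IsRectUnion.const IsQF.tru False).congr fun _ _ _ _ => by simp [Sat, adu, hi, hj]
  · exact (IsRectUnion.const IsQF.tru False).congr fun _ _ _ _ => by simp [Sat, adu, hi, hj]
  · exact (IsRectUnion.rect IsQF.tru (IsQF.eq b b')).congr fun _ _ _ _ => by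
      simp [Sat, adu, hi, hj]

theorem IsQF.isRectUnion_adu {ψ : Formula (annotV τ) r} (hψ : IsQF ψ)
    (e : Fin r → Fin r₁ ⊕ Fin r₂) :
    IsRectUnion IsQF fun A₁ A₂ u₁ u₂ => Sat (adu A₁ A₂) ψ fun i => Sum.map u₁ u₂ (e i) := by
  induction hψ with
  | tru => exact (IsRectUnion.const IsQF.tru True).congr fun _ _ _ _ => Iff.rfl
  | fls => exact (IsRectUnion.const IsQF.tru False).congr fun _ _ _ _ => Iff.rfl
  | rel R ts => exact isRectUnion_adu_rel R ts e
  | nrel R ts => exact (isRectUnion_adu_rel R ts e).not_of_isQF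
  | eq i j => exact isRectUnion_adu_eq i j e
  | neq i j => exact (isRectUnion_adu_eq i j e).not_of_isQF
  | iAnd I hI f _ ih => have := hI; exact IsRectUnion.iInter ih fun γ => IsQF.iAnd I hI γ
  | iOr I hI f _ ih => have := hI; exact IsRectUnion.iUnion ih

end AnnotatedUnion

section Splitting

variable {τ : Vocab} {r : ℕ}

/-- Feferman–Vaught decomposition of `φ` over `sumLike Ξ`: however the free variables are taken
from the two summands (as prescribed by `e`), `φ` is a finite union of rectangles with sides
in `C`. -/
def Splits (Ξ : QFInterp (annotV τ) τ) (C : ∀ {k : ℕ}, Formula τ k → Prop)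
    (φ : Formula τ r) : Prop :=
  ∀ (r₁ r₂ : ℕ) (e : Fin r → Fin r₁ ⊕ Fin r₂), ∃ P, IsRectUnion C P ∧
    ∀ (A₁ A₂ : Struc τ) u₁ u₂ (v : Fin r → (sumLike Ξ A₁ A₂).carrier),
      (∀ i, (v i).1 = Sum.map u₁ u₂ (e i)) → (Sat (sumLike Ξ A₁ A₂) φ v ↔ P A₁ A₂ u₁ u₂)

variable {Ξ : QFInterp (annotV τ) τ}

theorem Splits.mono {C D : ∀ {k : ℕ}, Formula τ k → Prop} {φ : Formula τ r}
    (h : Splits Ξ C φ) (hCD : ∀ {k} (ψ : Formula τ k), C ψ → D ψ) : Splits Ξ D φ :=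
  fun r₁ r₂ e => (h r₁ r₂ e).imp fun _ ⟨hP, hsat⟩ => ⟨hP.mono hCD, hsat⟩

theorem IsQF.splits {φ : Formula τ r} (hφ : IsQF φ) : Splits Ξ IsQF φ := by
  induction hφ with
  | tru => exact fun _ _ _ => ⟨_, IsRectUnion.const IsQF.tru True, fun _ _ _ _ _ _ => Iff.rfl⟩
  | fls => exact fun _ _ _ => ⟨_, IsRectUnion.const IsQF.tru False, fun _ _ _ _ _ _ => Iff.rfl⟩
  | rel R ts => exact fun _ _ e => ⟨_, (Ξ.hR R).isRectUnion_adu fun i => e (ts i),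
      fun _ _ _ _ _ hv => by simp only [sumLike, QFInterp.app, Sat, hv]⟩
  | nrel R ts => exact fun _ _ e =>
      ⟨_, ((Ξ.hR R).isRectUnion_adu fun i => e (ts i)).not_of_isQF,
        fun _ _ _ _ _ hv => by simp only [sumLike, QFInterp.app, Sat, hv]⟩
  | eq i j => exact fun _ _ e => ⟨_, (IsQF.eq i j).isRectUnion_adu e,
      fun _ _ _ _ _ hv => Subtype.ext_iff.trans (iff_of_eq (congrArg₂ Eq (hv i) (hv j)))⟩
  | neq i j => exact fun _ _ e => ⟨_, ((IsQF.eq i j).isRectUnion_adu e).not_of_isQF,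
      fun _ _ _ _ _ hv =>
        not_congr (Subtype.ext_iff.trans (iff_of_eq (congrArg₂ Eq (hv i) (hv j))))⟩
  | iAnd I hI f _ ih =>
      intro r₁ r₂ e
      have := hI
      choose P hP hsat using fun i => ih i r₁ r₂ e
      exact ⟨_, IsRectUnion.iInter hP fun γ => IsQF.iAnd I hI γ,
        fun _ _ _ _ _ hv => forall_congr' fun i => hsat i _ _ _ _ _ hv⟩
  | iOr I hI f _ ih =>
      intro r₁ r₂ e
      have := hI
      choose P hP hsat using fun i => ih i r₁ r₂ e
      exact ⟨_, IsRectUnion.iUnion hP,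
        fun _ _ _ _ _ hv => exists_congr fun i => hsat i _ _ _ _ _ hv⟩

theorem sat_sumLike_ex {A₁ A₂ : Struc τ} {φ : Formula τ (r + 1)}
    {v : Fin r → (sumLike Ξ A₁ A₂).carrier} :
    Sat (sumLike Ξ A₁ A₂) (.ex φ) v ↔
      (∃ b, ∃ hb : Sat (adu A₁ A₂) Ξ.xiU (fun _ => .inl b),
        Sat (sumLike Ξ A₁ A₂) φ (Fin.snoc v ⟨.inl b, hb⟩)) ∨
      (∃ b, ∃ hb : Sat (adu A₁ A₂) Ξ.xiU (fun _ => .inr b),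
        Sat (sumLike Ξ A₁ A₂) φ (Fin.snoc v ⟨.inr b, hb⟩)) := by
  simp only [Sat, sumLike, QFInterp.app, adu, Subtype.exists, Sum.exists]

theorem val_snoc_eq_sumMap_inl {r₁ r₂ : ℕ} {A₁ A₂ : Struc τ} {u₁ : Fin r₁ → A₁.carrier}
    {u₂ : Fin r₂ → A₂.carrier} {e : Fin r → Fin r₁ ⊕ Fin r₂}
    {v : Fin r → (sumLike Ξ A₁ A₂).carrier} (hv : ∀ i, (v i).1 = Sum.map u₁ u₂ (e i))
    (a : (sumLike Ξ A₁ A₂).carrier) (b : A₁.carrier) (hab : a.1 = .inl b) (i : Fin (r + 1)) :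
    (Fin.snoc (α := fun _ => (sumLike Ξ A₁ A₂).carrier) v a i).1 =
      Sum.map (Fin.snoc u₁ b) u₂ (Fin.snoc (α := fun _ => Fin (r₁ + 1) ⊕ Fin r₂)
        (fun i => Sum.map Fin.castSucc id (e i)) (.inl (Fin.last r₁)) i) := by
  refine Fin.lastCases ?_ (fun i => ?_) i
  · simpa using hab
  · rcases h : e i with c | c <;> simp [hv, h] <;> rfl

theorem val_snoc_eq_sumMap_inr {r₁ r₂ : ℕ} {A₁ A₂ : Struc τ} {u₁ : Fin r₁ → A₁.carrier}
    {u₂ : Fin r₂ → A₂.carrier} {e : Fin r → Fin r₁ ⊕ Fin r₂}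
    {v : Fin r → (sumLike Ξ A₁ A₂).carrier} (hv : ∀ i, (v i).1 = Sum.map u₁ u₂ (e i))
    (a : (sumLike Ξ A₁ A₂).carrier) (b : A₂.carrier) (hab : a.1 = .inr b) (i : Fin (r + 1)) :
    (Fin.snoc (α := fun _ => (sumLike Ξ A₁ A₂).carrier) v a i).1 =
      Sum.map u₁ (Fin.snoc u₂ b) (Fin.snoc (α := fun _ => Fin r₁ ⊕ Fin (r₂ + 1))
        (fun i => Sum.map id Fin.castSucc (e i)) (.inr (Fin.last r₂)) i) := by
  refine Fin.lastCases ?_ (fun i => ?_) i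
  · simpa using hab
  · rcases h : e i with c | c <;> simp [hv, h] <;> rfl

end Splitting

section Universes

universe u v

variable {τ : Vocab}

theorem rank_eq_lift_rank : ∀ {n : ℕ} (φ : Formula τ n),
    rank.{u} φ = Cardinal.lift.{u} (rank.{0} φ)
  | _, .tru | _, .fls | _, .rel _ _ | _, .nrel _ _ | _, .eq _ _ | _, .neq _ _ => by simp [rank]
  | _, .iAnd _ f | _, .iOr _ f => by
      simp only [rank, Cardinal.lift_iSup Cardinal.bddAbove_of_small, rank_eq_lift_rank]
  | _, .ex φ | _, .all φ => by
      simp only [rank, Cardinal.lift_add, Cardinal.lift_one, rank_eq_lift_rank φ]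

theorem rank_le_natCast_iff {n : ℕ} (φ : Formula τ n) (m : ℕ) :
    rank.{u} φ ≤ m ↔ rank.{v} φ ≤ m := by
  rw [rank_eq_lift_rank.{u}, rank_eq_lift_rank.{v}, ← Cardinal.lift_natCast.{u, 0},
    ← Cardinal.lift_natCast.{v, 0}, Cardinal.lift_le, Cardinal.lift_le]

mutual

theorem TSigma.univ_of_eq_natCast {κ : Cardinal} {lam : Ordinal.{u}} {n : ℕ} {φ : Formula τ n} :
    TSigma τ κ lam φ → ∀ k : ℕ, lam = k → TSigma.{v} τ κ k φ
  | .qf h, k, hk => by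
      obtain rfl : k = 0 := by exact_mod_cast hk.symm
      exact Nat.cast_zero (R := Ordinal) ▸ .qf h
  | .conj I f hI lam' hlt h, k, hk => by
      subst hk
      choose j hj using fun i =>
        Ordinal.lt_omega0.1 ((hlt i).trans (Ordinal.natCast_lt_omega0 k))
      exact .conj I f hI (fun i => (j i : Ordinal))
        (fun i => Nat.cast_lt.2 (Nat.cast_lt.1 (hj i ▸ hlt i)))
        fun i => (h i).univ_of_eq_natCast _ (hj i)
  | .ex h, k, hk => .ex (h.univ_of_eq_natCast k hk)

theorem TPi.univ_of_eq_natCast {κ : Cardinal} {lam : Ordinal.{u}} {n : ℕ} {φ : Formula τ n} :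
    TPi τ κ lam φ → ∀ k : ℕ, lam = k → TPi.{v} τ κ k φ
  | .qf h, k, hk => by
      obtain rfl : k = 0 := by exact_mod_cast hk.symm
      exact Nat.cast_zero (R := Ordinal) ▸ .qf h
  | .disj I f hI lam' hlt h, k, hk => by
      subst hk
      choose j hj using fun i =>
        Ordinal.lt_omega0.1 ((hlt i).trans (Ordinal.natCast_lt_omega0 k))
      exact .disj I f hI (fun i => (j i : Ordinal))
        (fun i => Nat.cast_lt.2 (Nat.cast_lt.1 (hj i ▸ hlt i)))
        fun i => (h i).univ_of_eq_natCast _ (hj i)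
  | .all h, k, hk => .all (h.univ_of_eq_natCast k hk)

end

end Universes

section Decomposition

variable {τ : Vocab} {Ξ : QFInterp (annotV τ) τ} {r : ℕ}

theorem Splits.ex {lam : Ordinal} {ρ : Cardinal} {φ : Formula τ (r + 1)}
    (h : Splits Ξ (TSigmaRk lam ρ) φ) : Splits Ξ (TSigmaRk lam (ρ + 1)) (.ex φ) := by
  intro r₁ r₂ e
  obtain ⟨PL, hPL, hL⟩ := h (r₁ + 1) r₂
    (Fin.snoc (fun i => Sum.map Fin.castSucc id (e i)) (.inl (Fin.last r₁)))
  obtain ⟨PR, hPR, hR⟩ := h r₁ (r₂ + 1)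
    (Fin.snoc (fun i => Sum.map id Fin.castSucc (e i)) (.inr (Fin.last r₂)))
  have hand : ∀ {k} (G ψ : Formula τ k), IsQF G → TSigmaRk lam ρ ψ →
      ∃ χ, TSigmaRk lam ρ χ ∧ ∀ (A : Struc τ) v, Sat A χ v ↔ Sat A G v ∧ Sat A ψ v :=
    fun _ _ hG hψ => (hψ.1.exists_and_isQF hG).imp fun _ ⟨hχ, hsat⟩ =>
      ⟨⟨hχ.1, hχ.2.trans hψ.2⟩, hsat⟩
  have hex : ∀ {k} (ψ : Formula τ (k + 1)), TSigmaRk lam ρ ψ → TSigmaRk lam (ρ + 1) (.ex ψ) :=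
    fun _ hψ => ⟨.ex hψ.1, add_le_add_left hψ.2 1⟩
  have hle : ∀ {k} (ψ : Formula τ k), TSigmaRk lam ρ ψ → TSigmaRk lam (ρ + 1) ψ :=
    fun _ hψ => ⟨hψ.1, hψ.2.trans le_self_add⟩
  refine ⟨_, (((Ξ.hU.isRectUnion_adu fun _ => .inl (Fin.last r₁)).and hPL hand).existsLeft
      hex hle).or (((Ξ.hU.isRectUnion_adu fun _ => .inr (Fin.last r₂)).and hPR hand).existsRight
      hex hle), fun A₁ A₂ u₁ u₂ v hv => ?_⟩
  rw [sat_sumLike_ex]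
  refine or_congr (exists_congr fun b => ?_) (exists_congr fun b => ?_)
  · simp only [Sum.map_inl, Fin.snoc_last]
    exact ⟨fun ⟨hb, hφ⟩ => ⟨hb, (hL _ _ _ _ _ (val_snoc_eq_sumMap_inl hv _ b rfl)).1 hφ⟩,
      fun ⟨hb, hφ⟩ => ⟨hb, (hL _ _ _ _ _ (val_snoc_eq_sumMap_inl hv _ b rfl)).2 hφ⟩⟩
  · simp only [Sum.map_inr, Fin.snoc_last]
    exact ⟨fun ⟨hb, hφ⟩ => ⟨hb, (hR _ _ _ _ _ (val_snoc_eq_sumMap_inr hv _ b rfl)).1 hφ⟩,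
      fun ⟨hb, hφ⟩ => ⟨hb, (hR _ _ _ _ _ (val_snoc_eq_sumMap_inr hv _ b rfl)).2 hφ⟩⟩

theorem Splits.iAnd {I : Type} [Finite I] {lam : Ordinal} {ρ : Cardinal}
    {f : I → Formula τ r} {lam' : I → Ordinal} {ρ' : I → Cardinal} (hlam : ∀ i, lam' i < lam)
    (hρ : ∀ i, ρ' i ≤ ρ) (h : ∀ i, Splits Ξ (TSigmaRk (lam' i) (ρ' i)) (nnfNeg (f i))) :
    Splits Ξ (TSigmaRk lam ρ) (.iAnd I f) := by
  intro r₁ r₂ e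
  choose P hP hsat using fun i => h i r₁ r₂ e
  have hlower : ∀ i, IsRectUnion (fun ψ => ∃ μ < lam, TSigmaRk μ ρ ψ) (P i) := fun i =>
    (hP i).mono fun _ hψ => ⟨lam' i, hlam i, hψ.1, hψ.2.trans (hρ i)⟩
  refine ⟨_, (IsRectUnion.iUnion hlower).not (D := IsLowerPi lam ρ)
      (fun ψ ⟨μ, hμ, hψ, hr⟩ => .inr ⟨μ, hμ, hψ.nnfNeg, (rank_nnfNeg ψ).trans_le hr⟩)
      (.inl .tru) fun _ => TSigmaRk.iAnd, fun A₁ A₂ u₁ u₂ v hv => ?_⟩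
  simp only [not_exists, ← hsat _ A₁ A₂ u₁ u₂ v hv, sat_nnfNeg, not_not]
  rfl

mutual

theorem TSigma.splits {lam : Ordinal} {r : ℕ} {φ : Formula τ r} :
    TSigma τ ℵ₀ lam φ → Splits Ξ (TSigmaRk lam (rank φ)) φ
  | .qf hφ => hφ.splits.mono fun _ hψ => ⟨.qf hψ, hψ.rank_eq_zero ▸ zero_le⟩
  | .conj _ _ hI _ hlt h =>
      have := Cardinal.lt_aleph0_iff_finite.1 hI
      Splits.iAnd hlt (fun i => le_ciSup Cardinal.bddAbove_of_small i)
        fun i => (h i).splits_nnfNeg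
  | .ex hφ => hφ.splits.ex

theorem TPi.splits_nnfNeg {lam : Ordinal} {r : ℕ} {φ : Formula τ r} :
    TPi τ ℵ₀ lam φ → Splits Ξ (TSigmaRk lam (rank φ)) (nnfNeg φ)
  | .qf hφ => hφ.nnfNeg.splits.mono fun _ hψ => ⟨.qf hψ, hψ.rank_eq_zero ▸ zero_le⟩
  | .disj _ f hI _ hlt h =>
      have := Cardinal.lt_aleph0_iff_finite.1 hI
      Splits.iAnd hlt (fun i => le_ciSup Cardinal.bddAbove_of_small i)
        fun i => by rw [nnfNeg_nnfNeg]; exact (h i).splits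
  | .all hφ => hφ.splits_nnfNeg.ex

end

end Decomposition

section Equivalence

universe u v u' v'

variable {τ : Vocab}

def SigmaEquiv (lam : Ordinal) (ρ : Cardinal) (A B : Struc τ) : Prop :=
  ∀ φ : Formula τ 0, TSigma τ ℵ₀ lam φ → rank φ ≤ ρ → (Sat A φ emptyA ↔ Sat B φ emptyA)

def PiEquiv (lam : Ordinal) (ρ : Cardinal) (A B : Struc τ) : Prop :=
  ∀ φ : Formula τ 0, TPi τ ℵ₀ lam φ → rank φ ≤ ρ → (Sat A φ emptyA ↔ Sat B φ emptyA)

theorem piEquiv_iff_sigmaEquiv {lam : Ordinal} {ρ : Cardinal} {A B : Struc τ} :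
    PiEquiv lam ρ A B ↔ SigmaEquiv lam ρ A B := by
  constructor
  · intro h φ hφ hρ
    simpa only [sat_nnfNeg, not_iff_not] using
      h (nnfNeg φ) hφ.nnfNeg ((rank_nnfNeg φ).trans_le hρ)
  · intro h φ hφ hρ
    simpa only [sat_nnfNeg, not_iff_not] using
      h (nnfNeg φ) hφ.nnfNeg ((rank_nnfNeg φ).trans_le hρ)

theorem SigmaEquiv.sumLike {lam : Ordinal} {ρ : Cardinal} (Ξ : QFInterp (annotV τ) τ)
    {A₁ A₁' A₂ A₂' : Struc τ} (h₁ : SigmaEquiv lam ρ A₁ A₁') (h₂ : SigmaEquiv lam ρ A₂ A₂') :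
    SigmaEquiv lam ρ (sumLike Ξ A₁ A₂) (sumLike Ξ A₁' A₂') := by
  intro φ hφ hρ
  obtain ⟨P, ⟨J, _, α, β, hαβ, hP⟩, hsat⟩ := hφ.splits (Ξ := Ξ) 0 0 finZeroElim
  have hφ : ∀ B₁ B₂, Sat (FV.sumLike Ξ B₁ B₂) φ emptyA ↔
      ∃ j, Sat B₁ (α j) emptyA ∧ Sat B₂ (β j) emptyA := fun B₁ B₂ =>
    (hsat B₁ B₂ emptyA emptyA emptyA finZeroElim).trans (hP _ _ _ _)
  rw [hφ, hφ]
  exact exists_congr fun j => and_congr (h₁ _ (hαβ j).1.1 ((hαβ j).1.2.trans hρ))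
    (h₂ _ (hαβ j).2.1 ((hαβ j).2.2.trans hρ))

-- Every occurrence of `(n : Ordinal)` and of `rank φ ≤ m` in `stmt9` lives in its own universe.
theorem SigmaEquiv.univ {n m : ℕ} {A B : Struc τ}
    (h : SigmaEquiv.{u, v} (n : Ordinal) (m : Cardinal) A B) :
    SigmaEquiv.{u', v'} (n : Ordinal) (m : Cardinal) A B :=
  fun φ hφ hρ => h φ (hφ.univ_of_eq_natCast n rfl) ((rank_le_natCast_iff φ m).1 hρ)

end Equivalence

/-- For L one of tΣ_n[m] or tΠ_n[m] over τ and ⊛ a quantifier-free sum-like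
binary operation on τ-structures: if A₁, A₁' satisfy the same L sentences and A₂, A₂' satisfy
the same L sentences, then A₁ ⊛ A₂ and A₁' ⊛ A₂' satisfy the same L sentences. -/
theorem stmt9 (τ : Vocab) [Fintype τ.Rel] (n m : ℕ)
    (Ξ : QFInterp (annotV τ) τ) (A₁ A₁' A₂ A₂' : Struc τ) :
    ((∀ φ : Formula τ 0, TSigma τ ℵ₀ (n : Ordinal) φ → rank φ ≤ (m : Cardinal) →
        (Sat A₁ φ emptyA ↔ Sat A₁' φ emptyA)) →
     (∀ φ : Formula τ 0, TSigma τ ℵ₀ (n : Ordinal) φ → rank φ ≤ (m : Cardinal) →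
        (Sat A₂ φ emptyA ↔ Sat A₂' φ emptyA)) →
     ∀ φ : Formula τ 0, TSigma τ ℵ₀ (n : Ordinal) φ → rank φ ≤ (m : Cardinal) →
        (Sat (sumLike Ξ A₁ A₂) φ emptyA ↔ Sat (sumLike Ξ A₁' A₂') φ emptyA)) ∧
    ((∀ φ : Formula τ 0, TPi τ ℵ₀ (n : Ordinal) φ → rank φ ≤ (m : Cardinal) →
        (Sat A₁ φ emptyA ↔ Sat A₁' φ emptyA)) →
     (∀ φ : Formula τ 0, TPi τ ℵ₀ (n : Ordinal) φ → rank φ ≤ (m : Cardinal) →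
        (Sat A₂ φ emptyA ↔ Sat A₂' φ emptyA)) →
     ∀ φ : Formula τ 0, TPi τ ℵ₀ (n : Ordinal) φ → rank φ ≤ (m : Cardinal) →
        (Sat (sumLike Ξ A₁ A₂) φ emptyA ↔ Sat (sumLike Ξ A₁' A₂') φ emptyA)) := by
  refine ⟨fun h₁ h₂ => ?_, fun h₁ h₂ => ?_⟩
  · exact (SigmaEquiv.sumLike.{0, 0} Ξ (SigmaEquiv.univ h₁) (SigmaEquiv.univ h₂)).univ
  · exact piEquiv_iff_sigmaEquiv.2 (SigmaEquiv.sumLike.{0, 0} Ξ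
      (piEquiv_iff_sigmaEquiv.1 h₁).univ (piEquiv_iff_sigmaEquiv.1 h₂).univ).univ

end FV
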